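/- For every symmetric (permutation-invariant) pure state |ψ⟩ of n qubits, the geometric measure of entanglement satisfies E_G(|ψ⟩) ≤ log₂(n+1). -/

import Mathlib

open Finset

noncomputable def overlap {n : ℕ} (f g : (Fin n → Fin 2) → ℂ) : ℂ :=
  ∑ x : Fin n → Fin 2, (starRingEnd ℂ) (f x) * g x

noncomputable def symmPow (n : ℕ) (σ : Fin 2 → ℂ) : (Fin n → Fin 2) → ℂ :=
  fun x => ∏ i, σ (x i)

noncomputable def prodState {n : ℕ} (σ : Fin n → Fin 2 → ℂ) : (Fin n → Fin 2) → ℂ :=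
  fun x => ∏ j, σ j (x j)

def qubitUnit (σ : Fin 2 → ℂ) : Prop :=
  ‖σ 0‖ ^ 2 + ‖σ 1‖ ^ 2 = 1

noncomputable def dicke (n k : ℕ) : (Fin n → Fin 2) → ℂ :=
  fun x => if (∑ i, ((x i : ℕ))) = k then ((1 / Real.sqrt (n.choose k) : ℝ) : ℂ) else 0

noncomputable def bloch (θ ph : ℝ) : Fin 2 → ℂ :=
  fun i => if i = 0 then ((Real.cos (θ/2) : ℝ) : ℂ)
           else Complex.exp (Complex.I * ph) * ((Real.sin (θ/2) : ℝ) : ℂ)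

def isCPP (n : ℕ) (ψ : (Fin n → Fin 2) → ℂ) (σ : Fin 2 → ℂ) : Prop :=
  qubitUnit σ ∧ ∀ τ, qubitUnit τ →
    ‖overlap (symmPow n τ) ψ‖ ≤ ‖overlap (symmPow n σ) ψ‖

/-!
For σ = (√(1 - x), ω √x) the overlap ⟨σ^⊗n|ψ⟩ is Σₖ ω̄ᵏ cₖ with
cₖ = √(1-x)^(n-k) √x^k Sₖ, where Sₖ is the sum of the amplitudes of ψ over the basis vectors of
Hamming weight k. Averaging its squared modulus over the (n+1)-st roots of unity ω kills the cross
terms (discrete Parseval), leaving Σₖ xᵏ (1-x)^(n-k) |Sₖ|². By the Beta integral,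
∫₀¹ xᵏ (1-x)^(n-k) dx = 1 / ((n+1) C(n,k)), and for symmetric ψ the amplitudes are constant on each
weight class, so |Sₖ|² = C(n,k) Σ_{wt y = k} |ψ y|². Hence the average over (x, ω) equals
‖ψ‖² / (n+1) = 1 / (n+1), and some product state σ^⊗n attains at least that fidelity.
-/

open scoped ComplexConjugate

lemma Fin.two_eq_of_eq_one_iff {a b : Fin 2} (h : a = 1 ↔ b = 1) : a = b := by
  revert a b; decide

section Weight

variable {n : ℕ}

def weight (y : Fin n → Fin 2) : ℕ := #{i | y i = 1}

lemma weight_le (y : Fin n → Fin 2) : weight y ≤ n :=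
  (card_filter_le _ _).trans_eq (card_fin n)

lemma card_filter_eq_zero (y : Fin n → Fin 2) : #{i | y i = 0} = n - weight y := by
  have h := card_eq_sum_card_fiberwise (f := y) (s := univ) (t := univ) (fun _ _ => mem_univ _)
  rw [card_univ, Fintype.card_fin, Fin.sum_univ_two] at h
  rw [weight]
  omega

lemma prod_comp_eq_pow_weight {M : Type*} [CommMonoid M] (f : Fin 2 → M) (y : Fin n → Fin 2) :
    ∏ i, f (y i) = f 0 ^ (n - weight y) * f 1 ^ weight y := by
  simp only [← prod_fiberwise' univ y f, prod_const, Fin.prod_univ_two, card_filter_eq_zero, weight]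

lemma card_filter_weight_eq (k : ℕ) : #{y : Fin n → Fin 2 | weight y = k} = n.choose k := by
  rw [show n.choose k = #(powersetCard k (univ : Finset (Fin n))) by simp]
  refine card_nbij' (fun y => ({i | y i = 1} : Finset (Fin n)))
    (fun s i => if i ∈ s then 1 else 0) ?_ ?_ ?_ ?_
  · intro y hy
    simpa [weight] using (mem_filter.1 hy).2
  · intro s hs
    rw [mem_coe, mem_filter, weight]
    simpa using (mem_powersetCard.1 hs).2
  · intro y _
    funext i
    apply Fin.two_eq_of_eq_one_iff
    simp
  · intro s _
    ext i
    simp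

lemma exists_perm_comp_eq_of_weight_eq {y z : Fin n → Fin 2} (h : weight z = weight y) :
    ∃ π : Equiv.Perm (Fin n), z = y ∘ π := by
  obtain ⟨π, hπ⟩ := Equiv.Perm.exists_map_finset_eq {i | z i = 1} {i | y i = 1} h
  refine ⟨π, funext fun i => Fin.two_eq_of_eq_one_iff ?_⟩
  simpa using congrArg (π i ∈ ·) hπ

end Weight

lemma norm_sum_sq_eq_card_mul_sum_norm_sq {ι E : Type*} [SeminormedAddCommGroup E]
    [NormedSpace ℝ E] {s : Finset ι} {f : ι → E} (hf : ∀ a ∈ s, ∀ b ∈ s, f a = f b) :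
    ‖∑ a ∈ s, f a‖ ^ 2 = #s * ∑ a ∈ s, ‖f a‖ ^ 2 := by
  rcases s.eq_empty_or_nonempty with rfl | ⟨a, ha⟩
  · simp
  have hconst : ∀ b ∈ s, f b = f a := fun b hb => hf b hb a ha
  rw [sum_congr rfl hconst, sum_congr rfl fun b hb => congrArg (‖·‖ ^ 2) (hconst b hb),
    sum_const, sum_const, ← Nat.cast_smul_eq_nsmul ℝ, norm_smul, nsmul_eq_mul, Real.norm_natCast]
  ring

section Symmetric

variable {n : ℕ}

def weightSum (ψ : (Fin n → Fin 2) → ℂ) (k : ℕ) : ℂ := ∑ y with weight y = k, ψ y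

lemma overlap_symmPow_eq_sum_weightSum (σ : Fin 2 → ℂ) (ψ : (Fin n → Fin 2) → ℂ) :
    overlap (symmPow n σ) ψ =
      ∑ k ∈ range (n + 1), conj (σ 0) ^ (n - k) * conj (σ 1) ^ k * weightSum ψ k := by
  simp only [overlap, symmPow, map_prod, prod_comp_eq_pow_weight (fun b => conj (σ b)),
    weightSum, mul_sum]
  rw [← sum_fiberwise_of_maps_to fun y _ => mem_range_succ_iff.2 (weight_le y)]
  refine sum_congr rfl fun k _ => sum_congr rfl fun y hy => ?_
  rw [(mem_filter.1 hy).2]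

variable {ψ : (Fin n → Fin 2) → ℂ} (hsym : ∀ π : Equiv.Perm (Fin n), ∀ x, ψ (x ∘ π) = ψ x)
include hsym

lemma norm_weightSum_sq (k : ℕ) :
    ‖weightSum ψ k‖ ^ 2 = n.choose k * ∑ y with weight y = k, ‖ψ y‖ ^ 2 := by
  rw [weightSum, norm_sum_sq_eq_card_mul_sum_norm_sq, card_filter_weight_eq]
  intro y hy z hz
  obtain ⟨π, rfl⟩ :=
    exists_perm_comp_eq_of_weight_eq ((mem_filter.1 hy).2.trans (mem_filter.1 hz).2.symm)
  exact hsym π z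

lemma sum_norm_weightSum_sq_div_choose :
    ∑ k ∈ range (n + 1), ‖weightSum ψ k‖ ^ 2 / n.choose k = ∑ y, ‖ψ y‖ ^ 2 := by
  rw [← sum_fiberwise_of_maps_to fun y _ => mem_range_succ_iff.2 (weight_le y)]
  refine sum_congr rfl fun k hk => ?_
  have : (n.choose k : ℝ) ≠ 0 := by
    exact_mod_cast (Nat.choose_pos (mem_range_succ_iff.1 hk)).ne'
  rw [norm_weightSum_sq hsym, mul_div_cancel_left₀ _ this]

end Symmetric

section RootsOfUnity

variable {N : ℕ} {ζ : ℂ}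

lemma IsPrimitiveRoot.sum_pow_mul_conj_pow (hζ : IsPrimitiveRoot ζ N) {k l : ℕ} (hk : k < N)
    (hl : l < N) :
    ∑ j ∈ range N, (ζ ^ j) ^ k * conj ((ζ ^ j) ^ l) = if k = l then (N : ℂ) else 0 := by
  set r := ζ ^ k * conj (ζ ^ l)
  have hterm : ∀ j, (ζ ^ j) ^ k * conj ((ζ ^ j) ^ l) = r ^ j := fun j => by
    simp only [r, mul_pow, ← pow_mul, map_pow, mul_comm j]
  have hnorm : ∀ m, conj (ζ ^ m) * ζ ^ m = 1 := fun m => by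
    rw [mul_comm, Complex.mul_conj', norm_pow, hζ.norm'_eq_one (by omega)]
    simp
  have hζk : ζ ^ k = r * ζ ^ l := by rw [mul_assoc, hnorm, mul_one]
  simp only [hterm]
  split_ifs with hkl
  · subst hkl
    have hr : r = 1 := (mul_comm _ _).trans (hnorm k)
    simp [hr]
  · have hr : r ≠ 1 := fun h => hkl <| hζ.pow_inj hk hl <| by rw [hζk, h, one_mul]
    have hrN : r ^ N = 1 := by
      rw [mul_pow, ← map_pow, ← pow_mul, ← pow_mul, mul_comm k, mul_comm l, pow_mul, pow_mul,
        hζ.pow_eq_one, one_pow, one_pow, map_one, mul_one]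
    rw [geom_sum_eq hr, hrN, sub_self, zero_div]

lemma IsPrimitiveRoot.sum_norm_sq_sum_pow_mul (hζ : IsPrimitiveRoot ζ N) (c : ℕ → ℂ) :
    ∑ j ∈ range N, ‖∑ k ∈ range N, (ζ ^ j) ^ k * c k‖ ^ 2 = N * ∑ k ∈ range N, ‖c k‖ ^ 2 := by
  apply Complex.ofReal_injective
  push_cast
  simp only [← Complex.mul_conj', map_sum, map_mul, sum_mul_sum]
  rw [sum_comm, mul_sum]
  refine sum_congr rfl fun k hk => ?_
  rw [sum_comm]
  calc _ = ∑ l ∈ range N, c k * conj (c l) * ∑ j ∈ range N, (ζ ^ j) ^ k * conj ((ζ ^ j) ^ l) := by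
        simp only [mul_sum]
        exact sum_congr rfl fun l _ => sum_congr rfl fun j _ => by ring
    _ = N * (c k * conj (c k)) := by
        rw [sum_congr rfl fun l hl => by
          rw [hζ.sum_pow_mul_conj_pow (mem_range.1 hk) (mem_range.1 hl), mul_ite, mul_zero]]
        rw [sum_ite_eq, if_pos hk, mul_comm]

end RootsOfUnity

noncomputable def trialQubit (x : ℝ) (ω : ℂ) : Fin 2 → ℂ := ![(√(1 - x) : ℂ), ω * (√x : ℂ)]

lemma qubitUnit_trialQubit {x : ℝ} (hx : x ∈ Set.Icc 0 1) {ω : ℂ} (hω : ‖ω‖ = 1) :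
    qubitUnit (trialQubit x ω) := by
  simp [qubitUnit, trialQubit, hω, Real.sq_sqrt hx.1, Real.sq_sqrt (sub_nonneg.2 hx.2)]

section PhaseAverage

variable {n : ℕ}

noncomputable def phaseMeanFidelity (ψ : (Fin n → Fin 2) → ℂ) (x : ℝ) : ℝ :=
  ∑ k ∈ range (n + 1), x ^ k * (1 - x) ^ (n - k) * ‖weightSum ψ k‖ ^ 2

lemma sum_norm_overlap_trialQubit_sq {ζ : ℂ} (hζ : IsPrimitiveRoot ζ (n + 1)) {x : ℝ}
    (hx : x ∈ Set.Icc 0 1) (ψ : (Fin n → Fin 2) → ℂ) :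
    ∑ j ∈ range (n + 1), ‖overlap (symmPow n (trialQubit x (ζ ^ j))) ψ‖ ^ 2 =
      (n + 1) * phaseMeanFidelity ψ x := by
  set c : ℕ → ℂ := fun k => (√(1 - x) : ℂ) ^ (n - k) * (√x : ℂ) ^ k * weightSum ψ k
  have hoverlap : ∀ j, overlap (symmPow n (trialQubit x (ζ ^ j))) ψ =
      ∑ k ∈ range (n + 1), (conj ζ ^ j) ^ k * c k := fun j => by
    rw [overlap_symmPow_eq_sum_weightSum]
    refine sum_congr rfl fun k _ => ?_
    simp only [trialQubit, c, Matrix.cons_val_zero, Matrix.cons_val_one, map_mul, map_pow,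
      Complex.conj_ofReal]
    ring
  have hc : ∀ k, ‖c k‖ ^ 2 = x ^ k * (1 - x) ^ (n - k) * ‖weightSum ψ k‖ ^ 2 := fun k => by
    simp only [c, norm_mul, norm_pow, Complex.norm_real, Real.norm_eq_abs, mul_pow, ← pow_mul,
      abs_of_nonneg (Real.sqrt_nonneg _)]
    rw [pow_mul', pow_mul', Real.sq_sqrt hx.1, Real.sq_sqrt (sub_nonneg.2 hx.2)]
    ring
  simp only [hoverlap, (hζ.map_of_injective (starRingEnd ℂ).injective).sum_norm_sq_sum_pow_mul,
    hc, phaseMeanFidelity]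
  push_cast
  ring

end PhaseAverage

open Nat in
lemma integral_pow_mul_one_sub_pow (k m : ℕ) :
    ∫ x in (0 : ℝ)..1, x ^ k * (1 - x) ^ m = k ! * m ! / (k + m + 1)! := by
  have hbeta := Complex.betaIntegral_eq_Gamma_mul_div (k + 1) (m + 1)
    (by norm_cast; omega) (by norm_cast; omega)
  rw [show (k : ℂ) + 1 + (m + 1) = ((k + m + 1 : ℕ) : ℂ) + 1 by push_cast; ring,
    Complex.Gamma_nat_eq_factorial, Complex.Gamma_nat_eq_factorial,
    Complex.Gamma_nat_eq_factorial, Complex.betaIntegral] at hbeta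
  simp only [add_sub_cancel_right, Complex.cpow_natCast] at hbeta
  rw [← Complex.ofReal_inj, ← intervalIntegral.integral_ofReal]
  push_cast
  exact hbeta

open Nat in
lemma integral_pow_mul_one_sub_pow_sub {n k : ℕ} (hk : k ≤ n) :
    ∫ x in (0 : ℝ)..1, x ^ k * (1 - x) ^ (n - k) = 1 / ((n + 1) * n.choose k) := by
  rw [integral_pow_mul_one_sub_pow, Nat.add_sub_cancel' hk, factorial_succ,
    ← choose_mul_factorial_mul_factorial hk]
  push_cast
  field_simp

lemma integral_phaseMeanFidelity {n : ℕ} {ψ : (Fin n → Fin 2) → ℂ}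
    (hsym : ∀ π : Equiv.Perm (Fin n), ∀ x, ψ (x ∘ π) = ψ x) (hunit : ∑ x, ‖ψ x‖ ^ 2 = 1) :
    ∫ x in (0 : ℝ)..1, phaseMeanFidelity ψ x = 1 / (n + 1) := by
  have hint : ∀ k ∈ range (n + 1), IntervalIntegrable
      (fun x : ℝ => x ^ k * (1 - x) ^ (n - k) * ‖weightSum ψ k‖ ^ 2) MeasureTheory.volume 0 1 :=
    fun k _ => (by fun_prop : Continuous _).intervalIntegrable _ _
  simp only [phaseMeanFidelity]
  rw [intervalIntegral.integral_finsetSum hint]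
  calc _ = ∑ k ∈ range (n + 1), ‖weightSum ψ k‖ ^ 2 / (n.choose k : ℝ) / (n + 1) := by
        refine sum_congr rfl fun k hk => ?_
        rw [intervalIntegral.integral_mul_const,
          integral_pow_mul_one_sub_pow_sub (mem_range_succ_iff.1 hk)]
        field_simp
    _ = 1 / ((n : ℝ) + 1) := by rw [← sum_div, sum_norm_weightSum_sq_div_choose hsym, hunit]

lemma norm_overlap_sq_le {n : ℕ} (f g : (Fin n → Fin 2) → ℂ) :
    ‖overlap f g‖ ^ 2 ≤ (∑ x, ‖f x‖ ^ 2) * ∑ x, ‖g x‖ ^ 2 := by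
  have htri : ‖overlap f g‖ ≤ ∑ x, ‖f x‖ * ‖g x‖ :=
    (norm_sum_le _ _).trans_eq <| by simp only [norm_mul, Complex.norm_conj]
  exact (pow_le_pow_left₀ (norm_nonneg _) htri 2).trans (sum_mul_sq_le_sq_mul_sq _ _ _)

lemma sum_norm_prodState_sq {n : ℕ} {σ : Fin n → Fin 2 → ℂ} (hσ : ∀ j, qubitUnit (σ j)) :
    ∑ x, ‖prodState σ x‖ ^ 2 = 1 := by
  simp only [prodState, norm_prod, ← prod_pow]
  rw [← Fintype.prod_sum (fun j b => ‖σ j b‖ ^ 2)]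
  exact prod_eq_one fun j _ => by rw [Fin.sum_univ_two]; exact hσ j

lemma phaseMeanFidelity_le {n : ℕ} {ψ : (Fin n → Fin 2) → ℂ} {s : ℝ}
    (hs : ∀ σ, qubitUnit σ → ‖overlap (symmPow n σ) ψ‖ ^ 2 ≤ s) {x : ℝ} (hx : x ∈ Set.Icc 0 1) :
    phaseMeanFidelity ψ x ≤ s := by
  have hζ := Complex.isPrimitiveRoot_exp (n + 1) n.succ_ne_zero
  have hnorm : ∀ j : ℕ, ‖Complex.exp (2 * Real.pi * Complex.I / ↑(n + 1)) ^ j‖ = 1 := fun j => by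
    rw [norm_pow, hζ.norm'_eq_one n.succ_ne_zero, one_pow]
  have hsum := sum_le_sum fun j (_ : j ∈ range (n + 1)) => hs _ (qubitUnit_trialQubit hx (hnorm j))
  rw [sum_norm_overlap_trialQubit_sq hζ hx, sum_const, card_range, nsmul_eq_mul] at hsum
  push_cast at hsum
  exact le_of_mul_le_mul_left hsum (by positivity)

theorem symmetric_entanglement_upper_bound_general
    (n : ℕ) (ψ : (Fin n → Fin 2) → ℂ)
    (hsym : ∀ π : Equiv.Perm (Fin n), ∀ x, ψ (x ∘ π) = ψ x)
    (hunit : ∑ x, ‖ψ x‖ ^ 2 = 1) :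
    - Real.logb 2 (sSup {a : ℝ | ∃ σ : Fin n → Fin 2 → ℂ, (∀ j, qubitUnit (σ j)) ∧
        a = ‖overlap (prodState σ) ψ‖ ^ 2})
      ≤ Real.logb 2 ((n : ℝ) + 1) := by
  set S := {a : ℝ | ∃ σ : Fin n → Fin 2 → ℂ, (∀ j, qubitUnit (σ j)) ∧
    a = ‖overlap (prodState σ) ψ‖ ^ 2}
  have hbdd : BddAbove S := ⟨1, by
    rintro _ ⟨σ, hσ, rfl⟩
    simpa [sum_norm_prodState_sq hσ, hunit] using norm_overlap_sq_le (prodState σ) ψ⟩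
  have hsymPow : ∀ σ, qubitUnit σ → ‖overlap (symmPow n σ) ψ‖ ^ 2 ≤ sSup S :=
    fun σ hσ => le_csSup hbdd ⟨fun _ => σ, fun _ => hσ, rfl⟩
  have hcont : Continuous (phaseMeanFidelity ψ) := by unfold phaseMeanFidelity; fun_prop
  have hS : 1 / ((n : ℝ) + 1) ≤ sSup S :=
    calc 1 / ((n : ℝ) + 1) = ∫ x in (0 : ℝ)..1, phaseMeanFidelity ψ x :=
          (integral_phaseMeanFidelity hsym hunit).symm
      _ ≤ ∫ _ in (0 : ℝ)..1, sSup S :=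
          intervalIntegral.integral_mono_on zero_le_one (hcont.intervalIntegrable 0 1)
            intervalIntegrable_const fun x hx => phaseMeanFidelity_le hsymPow hx
      _ = sSup S := by simp
  rw [← Real.logb_inv]
  have hpos : 0 < 1 / ((n : ℝ) + 1) := by positivity
  exact Real.logb_le_logb_of_le one_lt_two (inv_pos.2 (hpos.trans_le hS))
    (inv_le_of_inv_le₀ (by positivity) (by rwa [← one_div]))

theorem symmetric_entanglement_upper_bound
    (n : ℕ) (hn : 0 < n) (ψ : (Fin n → Fin 2) → ℂ)
    (hsym : ∀ π : Equiv.Perm (Fin n), ∀ x, ψ (x ∘ π) = ψ x)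
    (hunit : ∑ x, ‖ψ x‖ ^ 2 = 1) :
    - Real.logb 2 (sSup {a : ℝ | ∃ σ : Fin n → Fin 2 → ℂ, (∀ j, qubitUnit (σ j)) ∧
        a = ‖overlap (prodState σ) ψ‖ ^ 2})
      ≤ Real.logb 2 ((n : ℝ) + 1) :=
  symmetric_entanglement_upper_bound_general n ψ hsym hunit
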